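/- A free continuous action G ↷ X of a countable discrete group on a compact metric space is almost finite if and only if for every n ∈ ℕ, finite set K ⊆ G, and δ > 0 there are an open castle {(Vᵢ,Sᵢ)}_{i∈I} whose shapes are (K,δ)-invariant, whose levels have diameter less than δ, and with the additional property that for each i the sets s·cl(Vᵢ) for s ∈ Sᵢ are pairwise disjoint, together with sets Sᵢ' ⊆ Sᵢ with |Sᵢ'| < |Sᵢ|/n such that X ∖ ⊔ᵢ SᵢVᵢ ≺ ⊔ᵢ Sᵢ'Vᵢ. -/

import Mathlib

open Pointwise MeasureTheory
open scoped ENNReal NNReal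

namespace Kerr

section Basic

variable (G : Type) [Group G] (X : Type) [TopologicalSpace X] [MulAction G X]

/-- The action of `G` on `X` is free. -/
def IsFreeAction : Prop := ∀ (g : G) (x : X), g • x = x → g = 1

/-- The action of `G` on `X` is minimal: there is no proper nonempty closed invariant subset. -/
def IsMinimalAction : Prop :=
  ∀ C : Set X, IsClosed C → (∀ g : G, g • C ⊆ C) → C = ∅ ∨ C = Set.univ

/-- `X` is zero-dimensional: it has a basis of clopen sets. -/
def ZeroDimensional : Prop :=
  ∀ (x : X) (U : Set X), IsOpen U → x ∈ U → ∃ V : Set X, IsClopen V ∧ x ∈ V ∧ V ⊆ U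

/-- The dynamical subequivalence relation `A ≺ₘ B`: every closed subset `C` of `A` admits a
finite open cover `U` together with group elements `s u` and an `(m+1)`-colouring such that
the translates `s u • u` are contained in `B` and are pairwise disjoint within each colour. -/
def SubEquivM (m : ℕ) (A B : Set X) : Prop :=
  ∀ C : Set X, IsClosed C → C ⊆ A →
    ∃ (U : Finset (Set X)) (s : Set X → G) (col : Set X → Fin (m + 1)),
      (∀ u ∈ U, IsOpen u) ∧
      (C ⊆ ⋃ u ∈ U, u) ∧
      (∀ u ∈ U, s u • u ⊆ B) ∧
      (∀ u ∈ U, ∀ v ∈ U, u ≠ v → col u = col v → Disjoint (s u • u) (s v • v))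

/-- `(V, S)` is a tower: the translates `s • V`, `s ∈ S`, are pairwise disjoint. -/
def IsTower (V : Set X) (S : Finset G) : Prop :=
  ∀ s ∈ S, ∀ t ∈ S, s ≠ t → Disjoint (s • V) (t • V)

/-- The union `S V` of the levels of the tower `(V, S)`. -/
def towerSpan (V : Set X) (S : Finset G) : Set X := ⋃ s ∈ S, s • V

/-- A castle: a family of towers whose spans `Sᵢ Vᵢ` are pairwise disjoint. -/
def IsCastle {I : Type} (V : I → Set X) (S : I → Finset G) : Prop :=
  (∀ i, IsTower G X (V i) (S i)) ∧
  ∀ i j : I, i ≠ j →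
    Disjoint (towerSpan G X (V i) (S i)) (towerSpan G X (V j) (S j))

/-- The collection of towers `{(Vᵢ, Sᵢ)}` covers `X`. -/
def TowersCover {I : Type} (V : I → Set X) (S : I → Finset G) : Prop :=
  (⋃ i, towerSpan G X (V i) (S i)) = Set.univ

/-- The collection of towers `{(Vᵢ, Sᵢ)}` is `E`-Lebesgue. -/
def IsLebesgueTowers {I : Type} (E : Finset G) (V : I → Set X) (S : I → Finset G) : Prop :=
  ∀ x : X, ∃ i : I, ∃ t ∈ S i, x ∈ t • V i ∧ ∀ e ∈ E, e * t ∈ S i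

/-- The family `{Sᵢ Vᵢ}` has chromatic number at most `d`. -/
def ChromaticLE {I : Type} (V : I → Set X) (S : I → Finset G) (d : ℕ) : Prop :=
  ∃ col : I → Fin d, ∀ i j : I, i ≠ j → col i = col j →
    Disjoint (towerSpan G X (V i) (S i)) (towerSpan G X (V j) (S j))

/-- `towdim(X, G) ≤ d`. -/
def TowDimLE (d : ℕ) : Prop :=
  ∀ E : Finset G, ∃ (I : Type) (V : I → Set X) (S : I → Finset G),
    (∀ i, IsOpen (V i)) ∧ (∀ i, IsTower G X (V i) (S i)) ∧
    TowersCover G X V S ∧ IsLebesgueTowers G X E V S ∧ ChromaticLE G X V S (d + 1)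

/-- The tower dimension of the action, with value `⊤` if it is infinite. -/
noncomputable def towdim : ℕ∞ := sInf {n : ℕ∞ | ∃ d : ℕ, n = (d : ℕ∞) ∧ TowDimLE G X d}

/-- A Borel measure on `X` is invariant under the `G`-action. -/
def InvariantMeasure [MeasurableSpace X] (μ : Measure X) : Prop :=
  ∀ g : G, Measure.map (fun x : X => g • x) μ = μ

/-- The action has `m`-comparison. -/
def HasComparisonM [MeasurableSpace X] (m : ℕ) : Prop :=
  ∀ A B : Set X, IsOpen A → IsOpen B → A.Nonempty → B.Nonempty →
    (∀ μ : Measure X, IsProbabilityMeasure μ → InvariantMeasure G X μ → μ A < μ B) →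
    SubEquivM G X m A B

/-- `μ` is an ergodic `G`-invariant Borel probability measure, i.e. an extreme point of the
convex set of invariant Borel probability measures. -/
def IsErgodicInvariant [MeasurableSpace X] (μ : Measure X) : Prop :=
  IsProbabilityMeasure μ ∧ InvariantMeasure G X μ ∧
  ∀ (μ₁ μ₂ : Measure X) (t : ℝ≥0∞),
    IsProbabilityMeasure μ₁ → InvariantMeasure G X μ₁ →
    IsProbabilityMeasure μ₂ → InvariantMeasure G X μ₂ →
    0 < t → t < 1 → μ = t • μ₁ + (1 - t) • μ₂ → μ₁ = μ ∧ μ₂ = μ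

end Basic

section Cov

variable (X : Type) [TopologicalSpace X]

/-- The Lebesgue covering dimension of `X` is at most `d`. -/
def CovDimLE (d : ℕ) : Prop :=
  ∀ U : Finset (Set X), (∀ u ∈ U, IsOpen u) → (⋃ u ∈ U, u) = Set.univ →
    ∃ V : Finset (Set X), (∀ v ∈ V, IsOpen v) ∧ ((⋃ v ∈ V, v) = Set.univ) ∧
      (∀ v ∈ V, ∃ u ∈ U, v ⊆ u) ∧
      ∀ x : X, ({v : Set X | v ∈ V ∧ x ∈ v}).ncard ≤ d + 1

/-- The Lebesgue covering dimension of `X`, with value `⊤` if it is infinite. -/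
noncomputable def covdim : ℕ∞ := sInf {n : ℕ∞ | ∃ d : ℕ, n = (d : ℕ∞) ∧ CovDimLE X d}

end Cov

section Folner

variable (G : Type) [Group G]

/-- `S` is a nonempty `(K, δ)`-invariant finite subset of `G`. -/
def FolnerInv [DecidableEq G] (K : Finset G) (δ : ℝ) (S : Finset G) : Prop :=
  S.Nonempty ∧ ∀ s ∈ K, ((symmDiff (s • S) S).card : ℝ) < δ * (S.card : ℝ)

/-- `G` is amenable: it satisfies the Følner condition. -/
def AmenableFolner [DecidableEq G] : Prop :=
  ∀ (K : Finset G) (δ : ℝ), 0 < δ → ∃ S : Finset G, FolnerInv G K δ S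

/-- The asymptotic dimension of `G` is at most `d`. -/
def AsDimLE (d : ℕ) : Prop :=
  ∀ E : Finset G, ∃ (𝒰 : Set (Set G)) (F : Finset G),
    (∀ g : G, {u : Set G | u ∈ 𝒰 ∧ g ∈ u}.Finite ∧
      {u : Set G | u ∈ 𝒰 ∧ g ∈ u}.ncard ≤ d + 1) ∧
    (∀ u ∈ 𝒰, ∃ t : G, u ⊆ (fun f : G => f * t) '' (F : Set G)) ∧
    (∀ t : G, ∃ u ∈ 𝒰, (fun e : G => e * t) '' (E : Set G) ⊆ u)

/-- The asymptotic dimension of `G`, with value `⊤` if it is infinite. -/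
noncomputable def asdim : ℕ∞ := sInf {n : ℕ∞ | ∃ d : ℕ, n = (d : ℕ∞) ∧ AsDimLE G d}

end Folner

section AmDimDad

variable (G : Type) [Group G] (X : Type) [TopologicalSpace X] [MulAction G X]

/-- The amenability dimension of the action is at most `d`: for every finite `F ⊆ G` and
`ε > 0` there is a continuous map `φ : X → Δ_d(G) ⊆ ℓ¹(G)` which is `(F, ε)`-approximately
equivariant. -/
def AmDimLE (d : ℕ) : Prop :=
  ∀ (F : Finset G) (ε : ℝ), 0 < ε →
    ∃ φ : X → lp (fun _ : G => ℝ) 1,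
      Continuous φ ∧
      (∀ (x : X) (t : G), 0 ≤ (φ x : ∀ _ : G, ℝ) t) ∧
      (∀ x : X, (∑' t : G, (φ x : ∀ _ : G, ℝ) t) = 1) ∧
      (∀ x : X, (Function.support (φ x : ∀ _ : G, ℝ)).Finite ∧
        (Function.support (φ x : ∀ _ : G, ℝ)).ncard ≤ d + 1) ∧
      ∀ s ∈ F, ∀ x : X,
        (∑' t : G, |(φ (s • x) : ∀ _ : G, ℝ) t - (φ x : ∀ _ : G, ℝ) (s⁻¹ * t)|) < ε

/-- The amenability dimension, with value `⊤` if it is infinite. -/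
noncomputable def amdim : ℕ∞ := sInf {n : ℕ∞ | ∃ d : ℕ, n = (d : ℕ∞) ∧ AmDimLE G X d}

/-- The dynamic asymptotic dimension of the action is at most `d`. -/
def DadLE (d : ℕ) : Prop :=
  ∀ E : Finset G, ∃ (F : Finset G) (U : Finset (Set X)),
    (∀ u ∈ U, IsOpen u) ∧ U.card = d + 1 ∧ ((⋃ u ∈ U, u) = Set.univ) ∧
    ∀ u ∈ U, ∀ x ∈ u, ∀ l : List G, (∀ s ∈ l, s ∈ E) →
      (∀ k ≤ l.length, (l.take k).foldl (fun (y : X) (s : G) => s • y) x ∈ u) →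
      (l.foldl (fun (g : G) (s : G) => s * g) 1) ∈ F

/-- The dynamic asymptotic dimension, with value `⊤` if it is infinite. -/
noncomputable def daddim : ℕ∞ := sInf {n : ℕ∞ | ∃ d : ℕ, n = (d : ℕ∞) ∧ DadLE G X d}

end AmDimDad

section MetricDefs

variable (G : Type) [Group G] (X : Type) [MetricSpace X] [MulAction G X]

/-- The fine tower dimension of the action is at most `d`. -/
def FTowDimLE (d : ℕ) : Prop :=
  ∀ (E : Finset G) (δ : ℝ), 0 < δ →
    ∃ (I : Type) (V : I → Set X) (S : I → Finset G),
      (∀ i, IsOpen (V i)) ∧ (∀ i, IsTower G X (V i) (S i)) ∧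
      TowersCover G X V S ∧ IsLebesgueTowers G X E V S ∧
      (∀ i, ∀ s ∈ S i, Metric.diam (s • V i) < δ) ∧
      ChromaticLE G X V S (d + 1)

/-- The fine tower dimension, with value `⊤` if it is infinite. -/
noncomputable def ftowdim : ℕ∞ := sInf {n : ℕ∞ | ∃ d : ℕ, n = (d : ℕ∞) ∧ FTowDimLE G X d}

variable [DecidableEq G]

/-- The action is almost finite. -/
def AlmostFinite : Prop :=
  ∀ (n : ℕ) (K : Finset G) (δ : ℝ), 0 < n → 0 < δ →
    ∃ (I : Type) (_ : Fintype I) (V : I → Set X) (S S' : I → Finset G),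
      (∀ i, IsOpen (V i)) ∧ IsCastle G X V S ∧
      (∀ i, FolnerInv G K δ (S i)) ∧
      (∀ i, ∀ s ∈ S i, Metric.diam (s • V i) < δ) ∧
      (∀ i, S' i ⊆ S i) ∧
      (∀ i, ((S' i).card : ℝ) < ((S i).card : ℝ) / (n : ℝ)) ∧
      SubEquivM G X 0 (Set.univ \ ⋃ i, towerSpan G X (V i) (S i))
        (⋃ i, towerSpan G X (V i) (S' i))

/-- The action is `m`-almost finite. -/
def MAlmostFinite (m : ℕ) : Prop :=
  ∀ (n : ℕ) (K : Finset G) (δ : ℝ), 0 < n → 0 < δ →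
    ∃ (I : Type) (V : I → Set X) (S S' : I → Finset G),
      (∀ i, IsOpen (V i)) ∧ (∀ i, IsTower G X (V i) (S i)) ∧
      (∀ i, FolnerInv G K δ (S i)) ∧
      (∀ i, ∀ s ∈ S i, Metric.diam (s • V i) < δ) ∧
      ChromaticLE G X V S (m + 1) ∧
      (∀ i, S' i ⊆ S i) ∧
      (∀ i, ((S' i).card : ℝ) < ((S i).card : ℝ) / (n : ℝ)) ∧
      SubEquivM G X 0 (Set.univ \ ⋃ i, towerSpan G X (V i) (S i))
        (⋃ i, towerSpan G X (V i) (S' i))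

/-- The action is coarsely almost finite. -/
def CoarselyAlmostFinite : Prop :=
  ∀ (n : ℕ) (K : Finset G) (δ : ℝ), 0 < n → 0 < δ →
    ∃ (I : Type) (_ : Fintype I) (V : I → Set X) (S S' : I → Finset G),
      (∀ i, IsOpen (V i)) ∧ (∀ i, IsTower G X (V i) (S i)) ∧
      IsCastle G X (fun i => closure (V i)) S ∧
      (∀ i, FolnerInv G K δ (S i)) ∧
      (∀ i, S' i ⊆ S i) ∧
      (∀ i, ((S' i).card : ℝ) < ((S i).card : ℝ) / (n : ℝ)) ∧
      SubEquivM G X 0 (Set.univ \ ⋃ i, towerSpan G X (V i) (S i))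
        (⋃ i, towerSpan G X (V i) (S' i))

end MetricDefs

section TypeSemigroup

variable (G : Type) [Group G] (X : Type) [TopologicalSpace X] [MulAction G X]

/-- The elementary relation of dynamical equidecomposability on `C(X, ℤ≥0)`:
`f ∼ g` if `f = Σ hₖ` and `g = Σ α_{sₖ}(hₖ)` for continuous `hₖ : X → ℕ` and `sₖ ∈ G`. -/
def TypeRel (f g : X → ℕ) : Prop :=
  ∃ (n : ℕ) (h : Fin n → X → ℕ) (s : Fin n → G),
    (∀ k, Continuous (h k)) ∧
    (∀ x : X, (∑ k, h k x) = f x) ∧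
    (∀ x : X, (∑ k, h k ((s k)⁻¹ • x)) = g x)

/-- The equivalence relation defining the clopen type semigroup `S(X, G)`. -/
def TypeEquiv : (X → ℕ) → (X → ℕ) → Prop := Relation.EqvGen (TypeRel G X)

/-- The algebraic order on the type semigroup: `[f] ≤ [g]` iff `[f] + [h] = [g]` for some `h`. -/
def TypeLE (f g : X → ℕ) : Prop :=
  ∃ h : X → ℕ, Continuous h ∧ TypeEquiv G X (fun x => f x + h x) g

/-- The type semigroup `S(X, G)` is almost unperforated. -/
def TypeAlmostUnperforated : Prop :=
  ∀ f g : X → ℕ, Continuous f → Continuous g →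
    ∀ n : ℕ, TypeLE G X (fun x => (n + 1) * f x) (fun x => n * g x) → TypeLE G X f g

end TypeSemigroup

end Kerr

namespace Kerr

/-! Shrink each base `Vᵢ` to an open `Wᵢ` with `cl(Wᵢ) ⊆ Vᵢ`, keeping the shapes; everything
except the subequivalence passes to subsets. Exhaust each `Vᵢ` by an increasing sequence of open
sets `Wᵢⁿ` with closures in `Vᵢ`, and let `U ↦ s_U` (`U ∈ 𝒰`) witness
`X ∖ ⋃ Sᵢ Vᵢ ≺ ⋃ Sᵢ' Vᵢ`. The open sets `⋃ Sᵢ Wᵢⁿ ∪ ⋃_{U ∈ 𝒰} (U ∩ s_U⁻¹ ⋃ Sᵢ' Wᵢⁿ)` increase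
with `n` and exhaust `X`, so by compactness one of them is `X`; for that `n` the pieces
`U ∩ s_U⁻¹ ⋃ Sᵢ' Wᵢⁿ` cover `X ∖ ⋃ Sᵢ Wᵢⁿ` and witness `X ∖ ⋃ Sᵢ Wᵢⁿ ≺ ⋃ Sᵢ' Wᵢⁿ`. -/

open Set

theorem _root_.IsOpen.exists_iUnion_isOpen_closure_subset {X : Type*} [PseudoEMetricSpace X]
    {V : Set X} (hV : IsOpen V) :
    ∃ W : ℕ → Set X, (∀ n, IsOpen (W n)) ∧ (∀ n, closure (W n) ⊆ V) ∧ ⋃ n, W n = V ∧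
      Monotone W := by
  set W : ℕ → Set X := fun n => {x | (n : ℝ≥0∞)⁻¹ < Metric.infEDist x Vᶜ}
  have hW_closure : ∀ n, closure (W n) ⊆ V := fun n =>
    (closure_lt_subset_le continuous_const Metric.continuous_infEDist).trans fun x hx => by
      by_contra hxV
      have hpos : 0 < (n : ℝ≥0∞)⁻¹ := ENNReal.inv_pos.2 (ENNReal.natCast_ne_top n)
      exact hpos.not_ge (hx.trans (Metric.infEDist_zero_of_mem hxV).le)
  refine ⟨W, fun n => isOpen_lt continuous_const Metric.continuous_infEDist, hW_closure,
    subset_antisymm (iUnion_subset fun n => subset_closure.trans (hW_closure n)) fun x hx => ?_,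
    fun m n hmn x hx => (ENNReal.inv_le_inv.2 (Nat.cast_le.2 hmn)).trans_lt hx⟩
  have hx_pos : 0 < Metric.infEDist x Vᶜ := by
    rwa [Metric.infEDist_pos_iff_notMem_closure, hV.isClosed_compl.closure_eq, notMem_compl_iff]
  exact mem_iUnion.2 (ENNReal.exists_inv_nat_lt hx_pos.ne')

section Towers

variable {G X : Type} [Group G] [MulAction G X]

theorem mem_towerSpan {V : Set X} {S : Finset G} {x : X} :
    x ∈ towerSpan G X V S ↔ ∃ s ∈ S, s⁻¹ • x ∈ V := by
  simp only [towerSpan, mem_iUnion₂, mem_smul_set_iff_inv_smul_mem, exists_prop]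

@[gcongr]
theorem towerSpan_mono {V W : Set X} (S : Finset G) (h : W ⊆ V) :
    towerSpan G X W S ⊆ towerSpan G X V S :=
  iUnion₂_mono fun _ _ => smul_set_mono h

theorem towerSpan_iUnion {ι : Type*} (V : ι → Set X) (S : Finset G) :
    towerSpan G X (⋃ n, V n) S = ⋃ n, towerSpan G X (V n) S := by
  ext x
  simp only [mem_towerSpan, mem_iUnion]
  exact ⟨fun ⟨s, hs, n, hn⟩ => ⟨n, s, hs, hn⟩, fun ⟨n, s, hs, hn⟩ => ⟨s, hs, n, hn⟩⟩

theorem isOpen_towerSpan [TopologicalSpace X] [ContinuousConstSMul G X] {V : Set X}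
    (hV : IsOpen V) (S : Finset G) : IsOpen (towerSpan G X V S) :=
  isOpen_biUnion fun s _ => hV.smul s

theorem IsTower.mono {V W : Set X} {S : Finset G} (h : IsTower G X V S) (hWV : W ⊆ V) :
    IsTower G X W S :=
  fun s hs t ht hst => (h s hs t ht hst).mono (smul_set_mono hWV) (smul_set_mono hWV)

theorem IsCastle.mono {I : Type} {V W : I → Set X} {S : I → Finset G}
    (h : IsCastle G X V S) (hWV : ∀ i, W i ⊆ V i) : IsCastle G X W S :=
  ⟨fun i => (h.1 i).mono (hWV i),
    fun i j hij => (h.2 i j hij).mono (towerSpan_mono _ (hWV i)) (towerSpan_mono _ (hWV j))⟩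

theorem subEquivM_zero_of_subset_iUnion [TopologicalSpace X] {ι : Type*} [Finite ι]
    {A B : Set X} (u : ι → Set X) (s : ι → G) (hu : ∀ j, IsOpen (u j)) (hA : A ⊆ ⋃ j, u j)
    (hB : ∀ j, s j • u j ⊆ B) (hdisj : Pairwise fun j k => Disjoint (s j • u j) (s k • u k)) :
    SubEquivM G X 0 A B := by
  have hrange : ∀ U ∈ range u, ∃ g : G, ∃ k, u k = U ∧ s k = g :=
    fun _ ⟨k, hk⟩ => ⟨s k, k, hk, rfl⟩
  choose! t ht using hrange
  have ht' : ∀ k, ∃ k', u k' = u k ∧ s k' = t (u k) := fun k => ht _ (mem_range_self k)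
  refine fun C _ hCA => ⟨(finite_range u).toFinset, t, fun _ => 0, ?_, ?_, ?_, ?_⟩
  · simpa only [Finite.mem_toFinset, forall_mem_range] using hu
  · intro x hx
    obtain ⟨k, hk⟩ := mem_iUnion.1 (hA (hCA hx))
    exact mem_biUnion (by simp) hk
  · simp only [Finite.mem_toFinset, forall_mem_range]
    intro k
    obtain ⟨k', hk', hsk'⟩ := ht' k
    rw [← hsk', ← hk']
    exact hB k'
  · simp only [Finite.mem_toFinset, forall_mem_range]
    intro k l hkl _
    obtain ⟨k', hk', hsk'⟩ := ht' k
    obtain ⟨l', hl', hsl'⟩ := ht' l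
    rw [← hsk', ← hk', ← hsl', ← hl']
    exact hdisj fun h => hkl (by rw [← hk', ← hl', h])

theorem subEquivM_zero_of_subset_biUnion_inter [TopologicalSpace X] [ContinuousConstSMul G X]
    {𝒰 : Finset (Set X)} {s : Set X → G} {A R : Set X} (h𝒰_open : ∀ U ∈ 𝒰, IsOpen U)
    (h𝒰_disj : ∀ U ∈ 𝒰, ∀ U' ∈ 𝒰, U ≠ U' → Disjoint (s U • U) (s U' • U')) (hR : IsOpen R)
    (hA : A ⊆ ⋃ U ∈ 𝒰, U ∩ (s U)⁻¹ • R) : SubEquivM G X 0 A R := by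
  refine subEquivM_zero_of_subset_iUnion (fun U : 𝒰 => (U : Set X) ∩ (s U)⁻¹ • R) (fun U => s U)
    (fun U => (h𝒰_open U U.2).inter (hR.smul _)) (fun x hx => ?_) ?_ ?_
  · obtain ⟨U, hU, hxU⟩ := mem_iUnion₂.1 (hA hx)
    exact mem_iUnion.2 ⟨⟨U, hU⟩, hxU⟩
  · rintro U _ ⟨y, ⟨-, hy⟩, rfl⟩
    exact mem_inv_smul_set_iff.1 hy
  · intro U U' hUU'
    exact (h𝒰_disj U U.2 U' U'.2 (Subtype.coe_ne_coe.2 hUU')).mono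
      (smul_set_mono inter_subset_left) (smul_set_mono inter_subset_left)

end Towers

theorem exists_closure_subset_subEquivM_compl_towerSpan {G X : Type} [Group G]
    [PseudoEMetricSpace X] [CompactSpace X] [MulAction G X] [ContinuousConstSMul G X]
    {I : Type} [Finite I] {V : I → Set X} {S S' : I → Finset G} (hV : ∀ i, IsOpen (V i))
    (h : SubEquivM G X 0 (univ \ ⋃ i, towerSpan G X (V i) (S i))
      (⋃ i, towerSpan G X (V i) (S' i))) :
    ∃ W : I → Set X, (∀ i, IsOpen (W i)) ∧ (∀ i, closure (W i) ⊆ V i) ∧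
      SubEquivM G X 0 (univ \ ⋃ i, towerSpan G X (W i) (S i))
        (⋃ i, towerSpan G X (W i) (S' i)) := by
  have hA : IsClosed (univ \ ⋃ i, towerSpan G X (V i) (S i)) :=
    isClosed_univ.sdiff (isOpen_iUnion fun i => isOpen_towerSpan (hV i) _)
  obtain ⟨𝒰, s, col, h𝒰_open, hA_cover, h𝒰_maps, h𝒰_disj⟩ := h _ hA subset_rfl
  choose E hE_open hE_closure hE_iUnion hE_mono using
    fun i => (hV i).exists_iUnion_isOpen_closure_subset
  have hE_level : ∀ i (T : Finset G) {y : X}, y ∈ towerSpan G X (V i) T →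
      ∃ n, y ∈ towerSpan G X (E i n) T := fun i T y hy => by
    rwa [← hE_iUnion i, towerSpan_iUnion, mem_iUnion] at hy
  set R : ℕ → Set X := fun n => ⋃ i, towerSpan G X (E i n) (S' i)
  set P : ℕ → Set X := fun n =>
    (⋃ i, towerSpan G X (E i n) (S i)) ∪ ⋃ U ∈ 𝒰, U ∩ (s U)⁻¹ • R n
  have hR_open : ∀ n, IsOpen (R n) := fun n =>
    isOpen_iUnion fun i => isOpen_towerSpan (hE_open i n) _
  have hP_open : ∀ n, IsOpen (P n) := fun n =>
    (isOpen_iUnion fun i => isOpen_towerSpan (hE_open i n) _).union <|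
      isOpen_biUnion fun U hU => (h𝒰_open U hU).inter ((hR_open n).smul _)
  have hP_mono : Monotone P := fun m n hmn => by
    have hE := fun i => hE_mono i hmn
    simp only [P, R]
    gcongr <;> exact hE _
  have hP_cover : univ ⊆ ⋃ n, P n := by
    intro x _
    by_cases hx : x ∈ ⋃ i, towerSpan G X (V i) (S i)
    · obtain ⟨i, hi⟩ := mem_iUnion.1 hx
      obtain ⟨n, hn⟩ := hE_level i _ hi
      exact mem_iUnion.2 ⟨n, Or.inl (mem_iUnion.2 ⟨i, hn⟩)⟩
    · obtain ⟨U, hU, hxU⟩ := mem_iUnion₂.1 (hA_cover ⟨trivial, hx⟩)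
      obtain ⟨i, hi⟩ := mem_iUnion.1 (h𝒰_maps U hU (smul_mem_smul_set hxU))
      obtain ⟨n, hn⟩ := hE_level i _ hi
      exact mem_iUnion.2 ⟨n, Or.inr (mem_biUnion hU
        ⟨hxU, mem_inv_smul_set_iff.2 (mem_iUnion.2 ⟨i, hn⟩)⟩)⟩
  obtain ⟨n, hn⟩ := isCompact_univ.elim_directed_cover P hP_open hP_cover hP_mono.directed_le
  refine ⟨fun i => E i n, fun i => hE_open i n, fun i => hE_closure i n,
    subEquivM_zero_of_subset_biUnion_inter h𝒰_open
      (fun U hU U' hU' hUU' => h𝒰_disj U hU U' hU' hUU' (Fin.subsingleton_one.elim _ _))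
      (hR_open n) fun x hx => (hn trivial).resolve_left hx.2⟩

theorem almostFinite_iff_closure_disjoint_general
    (G X : Type) [Group G] [DecidableEq G]
    [MetricSpace X] [CompactSpace X]
    [MulAction G X] [ContinuousConstSMul G X] :
    AlmostFinite G X ↔
      ∀ (n : ℕ) (K : Finset G) (δ : ℝ), 0 < n → 0 < δ →
        ∃ (I : Type) (_ : Fintype I) (V : I → Set X) (S S' : I → Finset G),
          (∀ i, IsOpen (V i)) ∧ IsCastle G X V S ∧
          (∀ i, ∀ s ∈ S i, ∀ t ∈ S i, s ≠ t →
            Disjoint (s • closure (V i)) (t • closure (V i))) ∧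
          (∀ i, FolnerInv G K δ (S i)) ∧
          (∀ i, ∀ s ∈ S i, Metric.diam (s • V i) < δ) ∧
          (∀ i, S' i ⊆ S i) ∧
          (∀ i, ((S' i).card : ℝ) < ((S i).card : ℝ) / (n : ℝ)) ∧
          SubEquivM G X 0 (Set.univ \ ⋃ i, towerSpan G X (V i) (S i))
            (⋃ i, towerSpan G X (V i) (S' i)) := by
  refine ⟨fun hAF n K δ hn hδ => ?_, fun h n K δ hn hδ => ?_⟩
  · obtain ⟨I, hI, V, S, S', hV, hcastle, hfolner, hdiam, hS', hcard, hsub⟩ := hAF n K δ hn hδ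
    obtain ⟨W, hW, hWV, hWsub⟩ := exists_closure_subset_subEquivM_compl_towerSpan hV hsub
    have hWV' : ∀ i, W i ⊆ V i := fun i => subset_closure.trans (hWV i)
    refine ⟨I, hI, W, S, S', hW, hcastle.mono hWV', fun i => (hcastle.1 i).mono (hWV i),
      hfolner, fun i s hs => ?_, hS', hcard, hWsub⟩
    exact (Metric.diam_mono (smul_set_mono (hWV' i)) (isCompact_univ.isBounded.subset
      (subset_univ _))).trans_lt (hdiam i s hs)
  · obtain ⟨I, hI, V, S, S', hV, hcastle, -, hfolner, hdiam, hS', hcard, hsub⟩ := h n K δ hn hδ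
    exact ⟨I, hI, V, S, S', hV, hcastle, hfolner, hdiam, hS', hcard, hsub⟩

/-- Lemma 10.1: in the definition of almost finiteness one may additionally
require that, for each tower, the translates of the closure of the base are pairwise
disjoint. -/
theorem almostFinite_iff_closure_disjoint
    (G X : Type) [Group G] [Countable G] [DecidableEq G]
    [MetricSpace X] [CompactSpace X]
    [MulAction G X] [ContinuousConstSMul G X]
    (hfree : IsFreeAction G X) :
    AlmostFinite G X ↔
      ∀ (n : ℕ) (K : Finset G) (δ : ℝ), 0 < n → 0 < δ →
        ∃ (I : Type) (_ : Fintype I) (V : I → Set X) (S S' : I → Finset G),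
          (∀ i, IsOpen (V i)) ∧ IsCastle G X V S ∧
          (∀ i, ∀ s ∈ S i, ∀ t ∈ S i, s ≠ t →
            Disjoint (s • closure (V i)) (t • closure (V i))) ∧
          (∀ i, FolnerInv G K δ (S i)) ∧
          (∀ i, ∀ s ∈ S i, Metric.diam (s • V i) < δ) ∧
          (∀ i, S' i ⊆ S i) ∧
          (∀ i, ((S' i).card : ℝ) < ((S i).card : ℝ) / (n : ℝ)) ∧
          SubEquivM G X 0 (Set.univ \ ⋃ i, towerSpan G X (V i) (S i))
            (⋃ i, towerSpan G X (V i) (S' i)) :=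
  almostFinite_iff_closure_disjoint_general G X

end Kerr
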